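/- arXiv:2406.12148 — 6 statements merged into one kernel-verified Lean document; each statement's English description precedes it below -/
import Mathlib

section
/- For every positive natural number N, every family of real charges Q : Fin N → ℝ with ∑_{k} Q k = 0, and every family of charge points Z : Fin N → ℂ, the function z ↦ ∑_{k} Q k · Real.log ‖z − Z k‖ tends to 0 as z tends to infinity in ℂ. -/
/-! Since `∑ k, Q k = 0`, the sum equals `∑ k, Q k * (log ‖z - Z k‖ - log ‖z‖)`, and each
difference `log (‖z - Z k‖ / ‖z‖)` tends to `log 1 = 0` because `|‖z - c‖ - ‖z‖| ≤ ‖c‖`. -/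

open Filter Topology Bornology

section

variable {E : Type*} [SeminormedAddCommGroup E]

theorem tendsto_norm_sub_div_norm_cobounded (c : E) :
    Tendsto (fun z : E => ‖z - c‖ / ‖z‖) (cobounded E) (𝓝 1) := by
  have hnorm : Tendsto (fun z : E => ‖z‖) (cobounded E) atTop := tendsto_norm_cobounded_atTop
  have hsmall : Tendsto (fun z : E => ‖c‖ / ‖z‖) (cobounded E) (𝓝 0) :=
    tendsto_const_nhds.div_atTop hnorm
  rw [tendsto_iff_norm_sub_tendsto_zero]
  refine squeeze_zero' (Eventually.of_forall fun _ => norm_nonneg _) ?_ hsmall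
  filter_upwards [hnorm.eventually_gt_atTop 0] with z hz
  rw [div_sub_one hz.ne', norm_div, Real.norm_of_nonneg hz.le, Real.norm_eq_abs]
  gcongr
  simpa using abs_norm_sub_norm_le (z - c) z

theorem tendsto_log_norm_sub_sub_log_norm_cobounded (c : E) :
    Tendsto (fun z : E => Real.log ‖z - c‖ - Real.log ‖z‖) (cobounded E) (𝓝 0) := by
  have hlog : Tendsto (fun z : E => Real.log (‖z - c‖ / ‖z‖)) (cobounded E) (𝓝 0) := by
    simpa using (tendsto_norm_sub_div_norm_cobounded c).log one_ne_zero
  have hpos : ∀ᶠ z in cobounded E, 0 < ‖z‖ :=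
    tendsto_norm_cobounded_atTop.eventually_gt_atTop 0
  have hpos_sub : ∀ᶠ z in cobounded E, 0 < ‖z - c‖ :=
    (tendsto_sub_const_cobounded c).eventually hpos
  refine hlog.congr' ?_
  filter_upwards [hpos, hpos_sub] with z hz hzc
  exact Real.log_div hzc.ne' hz.ne'

theorem tendsto_sum_mul_log_norm_sub_cobounded {ι : Type*} (s : Finset ι) (Q : ι → ℝ)
    (hQ : ∑ k ∈ s, Q k = 0) (Z : ι → E) :
    Tendsto (fun z : E => ∑ k ∈ s, Q k * Real.log ‖z - Z k‖) (cobounded E) (𝓝 0) := by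
  have hsum : (fun z : E => ∑ k ∈ s, Q k * Real.log ‖z - Z k‖) =
      fun z => ∑ k ∈ s, Q k * (Real.log ‖z - Z k‖ - Real.log ‖z‖) := by
    funext z
    simp only [mul_sub, Finset.sum_sub_distrib, ← Finset.sum_mul, hQ, zero_mul, sub_zero]
  rw [hsum]
  simpa using tendsto_finsetSum s fun k _ =>
    (tendsto_log_norm_sub_sub_log_norm_cobounded (Z k)).const_mul (Q k)

end

theorem stmt_1_general (N : ℕ) (Q : Fin N → ℝ) (hQ : ∑ k, Q k = 0) (Z : Fin N → ℂ) :
    Tendsto (fun z : ℂ => ∑ k, Q k * Real.log ‖z - Z k‖)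
      (Bornology.cobounded ℂ) (nhds 0) :=
  tendsto_sum_mul_log_norm_sub_cobounded Finset.univ Q hQ Z

theorem stmt_1 (N : ℕ) (hN : 0 < N) (Q : Fin N → ℝ) (hQ : ∑ k, Q k = 0) (Z : Fin N → ℂ) :
    Tendsto (fun z : ℂ => ∑ k, Q k * Real.log ‖z - Z k‖)
      (Bornology.cobounded ℂ) (nhds 0) :=
  stmt_1_general N Q hQ Z
end

section
/- Assume the charge constraint ∑_{k} Q k = 0. Then the forward-mapping approximation ζ̃(z) = (z − z_c) · Complex.exp(Γ + ∑_{k} Q k · Complex.log((z − Z k)/(z − z_c))) tends to infinity as z tends to infinity in ℂ; that is, ζ̃ maps the cobounded filter on ℂ to the cobounded filter on ℂ (equivalently ‖ζ̃(z)‖ → ∞ as ‖z‖ → ∞). -/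
/-!
Each ratio `(z - Z k) / (z - z_c)` tends to `1`, where the principal logarithm is continuous, so the
exponential factor tends to `exp Γ ≠ 0` while `z - z_c` tends to infinity.
-/

open Filter Bornology Topology

theorem Filter.Tendsto.cobounded_mul_of_tendsto_ne_zero {α 𝕜 : Type*} [NormedDivisionRing 𝕜]
    {l : Filter α} {f g : α → 𝕜} {c : 𝕜} (hf : Tendsto f l (cobounded 𝕜))
    (hg : Tendsto g l (𝓝 c)) (hc : c ≠ 0) :
    Tendsto (fun x => f x * g x) l (cobounded 𝕜) := by
  rw [← tendsto_norm_atTop_iff_cobounded] at hf ⊢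
  simpa only [norm_mul] using hf.atTop_mul_pos (norm_pos_iff.mpr hc) hg.norm

theorem tendsto_sub_div_sub_cobounded {𝕜 : Type*} [NormedField 𝕜] (a b : 𝕜) :
    Tendsto (fun z => (z - a) / (z - b)) (cobounded 𝕜) (𝓝 1) := by
  have hb : Tendsto (fun z => z - b) (cobounded 𝕜) (cobounded 𝕜) := tendsto_sub_const_cobounded b
  have hlim : Tendsto (fun z => 1 + (b - a) * (z - b)⁻¹) (cobounded 𝕜) (𝓝 (1 + (b - a) * 0)) :=
    tendsto_const_nhds.add (tendsto_const_nhds.mul (tendsto_inv₀_cobounded.comp hb))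
  rw [mul_zero, add_zero] at hlim
  refine hlim.congr' ?_
  filter_upwards [hb.eventually_ne_cobounded 0] with z hz
  field_simp
  ring

theorem tendsto_log_sub_div_sub_cobounded (a b : ℂ) :
    Tendsto (fun z => Complex.log ((z - a) / (z - b))) (cobounded ℂ) (𝓝 0) := by
  simpa using (tendsto_sub_div_sub_cobounded a b).clog Complex.one_mem_slitPlane

theorem tendsto_exp_add_sum_mul_log_sub_div_sub_cobounded {ι : Type*} (s : Finset ι) (w : ℂ)
    (c a : ι → ℂ) (b : ℂ) :
    Tendsto (fun z => Complex.exp (w + ∑ k ∈ s, c k * Complex.log ((z - a k) / (z - b))))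
      (cobounded ℂ) (𝓝 (Complex.exp w)) := by
  have hsum : Tendsto (fun z => ∑ k ∈ s, c k * Complex.log ((z - a k) / (z - b)))
      (cobounded ℂ) (𝓝 0) := by
    simpa using tendsto_finsetSum s fun k _ =>
      (tendsto_log_sub_div_sub_cobounded (a k) b).const_mul (c k)
  simpa using (tendsto_const_nhds.add hsum).cexp

theorem stmt_4_general (N : ℕ) (Q : Fin N → ℝ)
    (Z : Fin N → ℂ) (z_c : ℂ) (Γ : ℝ) :
    Tendsto
      (fun z : ℂ =>
        (z - z_c) * Complex.exp ((Γ : ℂ) + ∑ k, (Q k : ℂ) * Complex.log ((z - Z k) / (z - z_c))))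
      (Bornology.cobounded ℂ) (Bornology.cobounded ℂ) :=
  (tendsto_sub_const_cobounded z_c).cobounded_mul_of_tendsto_ne_zero
    (tendsto_exp_add_sum_mul_log_sub_div_sub_cobounded _ _ _ _ _) (Complex.exp_ne_zero _)

theorem stmt_4 (N : ℕ) (hN : 0 < N) (Q : Fin N → ℝ) (hQ : ∑ k, Q k = 0)
    (Z : Fin N → ℂ) (z_c : ℂ) (Γ : ℝ) :
    Tendsto
      (fun z : ℂ =>
        (z - z_c) * Complex.exp ((Γ : ℂ) + ∑ k, (Q k : ℂ) * Complex.log ((z - Z k) / (z - z_c))))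
      (Bornology.cobounded ℂ) (Bornology.cobounded ℂ) :=
  stmt_4_general N Q Z z_c Γ
end

section
/- The forward-mapping approximation ζ̃(z) = (z − z_c) · Complex.exp(Γ + ∑_{k} Q k · Complex.log((z − Z k)/(z − z_c))) is complex-differentiable (holomorphic) on the complement of the union of the closed line segments joining z_c to the charge points Z k; that is, ζ̃ is DifferentiableOn ℂ on (⋃_{k} segment ℝ z_c (Z k))ᶜ. -/
open Complex

lemma sub_ne_zero_of_notMem_segment {E : Type*} [AddCommGroup E] [Module ℝ E] {a c z : E}
    (hz : z ∉ segment ℝ c a) : z - c ≠ 0 :=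
  sub_ne_zero.2 fun h => hz (h ▸ left_mem_segment ℝ c a)

/-- If the ratio were some `t ≤ 0`, then `a - z = (-t) • (z - c)` would put `z` on the segment. -/
lemma div_sub_mem_slitPlane_of_notMem_segment {a c z : ℂ} (hz : z ∉ segment ℝ c a) :
    (z - a) / (z - c) ∈ slitPlane := by
  have hzc := sub_ne_zero_of_notMem_segment hz
  by_contra hcut
  obtain ⟨hre, him⟩ : ((z - a) / (z - c)).re ≤ 0 ∧ ((z - a) / (z - c)).im = 0 := by
    simpa [mem_slitPlane_iff] using hcut
  set t := ((z - a) / (z - c)).re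
  have hratio : (z - a) / (z - c) = t := ext rfl (by simpa using him)
  have hray : a - z = (-t) • (z - c) := by
    rw [real_smul, ofReal_neg, ← hratio]
    field_simp
    ring
  apply hz
  rw [mem_segment_iff_sameRay, hray]
  exact SameRay.sameRay_nonneg_smul_right _ (neg_nonneg.2 hre)

lemma differentiableAt_log_div_sub_of_notMem_segment {a c z : ℂ} (hz : z ∉ segment ℝ c a) :
    DifferentiableAt ℂ (fun w => log ((w - a) / (w - c))) z :=
  ((differentiableAt_id.sub_const a).div (differentiableAt_id.sub_const c)
    (sub_ne_zero_of_notMem_segment hz)).clog (div_sub_mem_slitPlane_of_notMem_segment hz)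

theorem stmt_6_general (N : ℕ) (Q : Fin N → ℝ) (Z : Fin N → ℂ) (z_c : ℂ) (Γ : ℝ) :
    DifferentiableOn ℂ
      (fun z : ℂ =>
        (z - z_c) * Complex.exp ((Γ : ℂ) + ∑ k, (Q k : ℂ) * Complex.log ((z - Z k) / (z - z_c))))
      (⋃ k, segment ℝ z_c (Z k))ᶜ := by
  intro z hz
  have hz_k : ∀ k, z ∉ segment ℝ z_c (Z k) := by simpa using hz
  refine DifferentiableAt.differentiableWithinAt ?_
  refine (differentiableAt_id.sub_const z_c).mul (DifferentiableAt.cexp ?_)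
  refine (DifferentiableAt.fun_sum fun k _ => ?_).const_add _
  exact (differentiableAt_log_div_sub_of_notMem_segment (hz_k k)).const_mul _

theorem stmt_6 (N : ℕ) (hN : 0 < N) (Q : Fin N → ℝ) (Z : Fin N → ℂ) (z_c : ℂ) (Γ : ℝ) :
    DifferentiableOn ℂ
      (fun z : ℂ =>
        (z - z_c) * Complex.exp ((Γ : ℂ) + ∑ k, (Q k : ℂ) * Complex.log ((z - Z k) / (z - z_c))))
      (⋃ k, segment ℝ z_c (Z k))ᶜ :=
  stmt_6_general N Q Z z_c Γ
end

section
/- Assume the charge constraint ∑_{k} Q k = 0, and let R > 0 satisfy ‖Z k‖ < R for all k and ‖z_c‖ < R. Then ζ̃(z) = (z − z_c) · Complex.exp(Γ + ∑_{k} Q k · Complex.log((z − Z k)/(z − z_c))) is complex-differentiable at every z with ‖z‖ > R, and its derivative deriv ζ̃ tends to (Real.exp Γ : ℂ) as z tends to infinity in ℂ. -/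
/-!
For `‖z‖ > R` no ratio `(z - Z k) / (z - z_c)` is a nonpositive real `t`: otherwise
`(1 - t) z = Z k - t z_c`, whose right side has norm `< (1 - t) R`. Hence every principal
logarithm is holomorphic there, and with `L` the exponent,
`ζ̃' = exp L · (1 + ∑ Q k (Z k - z_c) / (z - Z k))`.
As `z → ∞` the ratios tend to `1`, so `L → Γ`, while the correction terms tend to `0`.
-/

open Filter Topology Bornology

lemma div_sub_mem_slitPlane {R : ℝ} {a b z : ℂ} (ha : ‖a‖ < R) (hb : ‖b‖ < R) (hz : R < ‖z‖) :
    (z - a) / (z - b) ∈ Complex.slitPlane := by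
  have hzb : z - b ≠ 0 := sub_ne_zero.mpr (ne_of_apply_ne norm (by linarith))
  rw [Complex.mem_slitPlane_iff_not_le_zero]
  intro hle
  set t := ((z - a) / (z - b)).re
  have ht : t ≤ 0 := (Complex.nonpos_iff.mp hle).1
  have hdiv : (z - a) / (z - b) = t :=
    Complex.ext rfl (by simpa using (Complex.nonpos_iff.mp hle).2)
  have hcomb : ((1 - t : ℝ) : ℂ) * z = a - (t : ℂ) * b := by
    rw [div_eq_iff hzb] at hdiv
    push_cast
    linear_combination hdiv
  have hnorm : (1 - t) * ‖z‖ ≤ ‖a‖ + -t * ‖b‖ := by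
    calc (1 - t) * ‖z‖ = ‖((1 - t : ℝ) : ℂ) * z‖ := by
          rw [norm_mul, Complex.norm_real, Real.norm_of_nonneg (by linarith)]
      _ = ‖a - (t : ℂ) * b‖ := by rw [hcomb]
      _ ≤ ‖a‖ + ‖(t : ℂ) * b‖ := norm_sub_le _ _
      _ = ‖a‖ + -t * ‖b‖ := by rw [norm_mul, Complex.norm_real, Real.norm_of_nonpos ht]
  nlinarith

lemma tendsto_const_div_sub_cobounded {𝕜 : Type*} [NormedField 𝕜] (c w : 𝕜) :
    Tendsto (fun z : 𝕜 => c / (z - w)) (cobounded 𝕜) (𝓝 0) := by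
  simpa [div_eq_mul_inv] using
    (tendsto_inv₀_cobounded.comp (tendsto_sub_const_cobounded w)).const_mul c

lemma tendsto_div_sub_div_sub_cobounded {𝕜 : Type*} [NormedField 𝕜] (a b : 𝕜) :
    Tendsto (fun z : 𝕜 => (z - a) / (z - b)) (cobounded 𝕜) (𝓝 1) := by
  have hlim := (tendsto_const_div_sub_cobounded (b - a) b).const_add 1
  rw [add_zero] at hlim
  refine hlim.congr' ?_
  filter_upwards [(tendsto_sub_const_cobounded b).eventually_ne_cobounded 0] with z hz
  field_simp
  ring

lemma tendsto_log_div_sub_div_sub_cobounded (a b : ℂ) :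
    Tendsto (fun z : ℂ => Complex.log ((z - a) / (z - b))) (cobounded ℂ) (𝓝 0) := by
  simpa using (tendsto_div_sub_div_sub_cobounded a b).clog Complex.one_mem_slitPlane

lemma hasDerivAt_log_div_sub_div_sub {a b z : ℂ} (hz : (z - a) / (z - b) ∈ Complex.slitPlane) :
    HasDerivAt (fun z : ℂ => Complex.log ((z - a) / (z - b)))
      ((a - b) / ((z - a) * (z - b))) z := by
  obtain ⟨hza, hzb⟩ := div_ne_zero_iff.mp (Complex.slitPlane_ne_zero hz)
  have hratio : HasDerivAt (fun z : ℂ => (z - a) / (z - b)) ((a - b) / (z - b) ^ 2) z :=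
    (((hasDerivAt_id' z).sub_const a).fun_div ((hasDerivAt_id' z).sub_const b) hzb).congr_deriv
      (by ring)
  convert hratio.clog hz using 1
  field_simp

namespace ChargeSimulation

variable {ι : Type*}

lemma eventually_mem_slitPlane_cobounded [Finite ι] (Z : ι → ℂ) (z_c : ℂ) :
    ∀ᶠ z in cobounded ℂ, ∀ k, (z - Z k) / (z - z_c) ∈ Complex.slitPlane :=
  eventually_all.mpr fun k => (tendsto_div_sub_div_sub_cobounded (Z k) z_c).eventually
    (Complex.isOpen_slitPlane.mem_nhds Complex.one_mem_slitPlane)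

variable [Fintype ι] (Q : ι → ℝ) (Z : ι → ℂ) (z_c : ℂ) (Γ : ℝ)

noncomputable def exponent (z : ℂ) : ℂ :=
  Γ + ∑ k, (Q k : ℂ) * Complex.log ((z - Z k) / (z - z_c))

/-- The approximation `ζ̃` of Eq. (3.9'). -/
noncomputable def forwardMap (z : ℂ) : ℂ :=
  (z - z_c) * Complex.exp (exponent Q Z z_c Γ z)

lemma tendsto_exponent_cobounded : Tendsto (exponent Q Z z_c Γ) (cobounded ℂ) (𝓝 Γ) := by
  have hlim := (tendsto_const_nhds (x := (Γ : ℂ))).add <| tendsto_finsetSum Finset.univ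
    fun k _ => (tendsto_log_div_sub_div_sub_cobounded (Z k) z_c).const_mul (Q k : ℂ)
  simp only [mul_zero, Finset.sum_const_zero, add_zero] at hlim
  exact hlim

variable {Q Z z_c Γ}

lemma hasDerivAt_forwardMap {z : ℂ} (hz : ∀ k, (z - Z k) / (z - z_c) ∈ Complex.slitPlane) :
    HasDerivAt (forwardMap Q Z z_c Γ)
      (Complex.exp (exponent Q Z z_c Γ z) * (1 + ∑ k, (Q k : ℂ) * ((Z k - z_c) / (z - Z k)))) z := by
  have hexponent : HasDerivAt (exponent Q Z z_c Γ)
      (∑ k, (Q k : ℂ) * ((Z k - z_c) / ((z - Z k) * (z - z_c)))) z :=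
    (HasDerivAt.fun_sum fun k _ => (hasDerivAt_log_div_sub_div_sub (hz k)).const_mul _).const_add _
  refine (((hasDerivAt_id' z).sub_const z_c).mul hexponent.cexp).congr_deriv ?_
  have hterm : ∀ k, (z - z_c) * ((Z k - z_c) / ((z - Z k) * (z - z_c))) =
      (Z k - z_c) / (z - Z k) := fun k => by
    obtain ⟨hzk, hzc⟩ := div_ne_zero_iff.mp (Complex.slitPlane_ne_zero (hz k))
    field_simp
  simp only [mul_add, mul_one, one_mul, Finset.mul_sum, ← hterm]
  congr 1
  exact Finset.sum_congr rfl fun k _ => by ring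

variable (Q Z z_c Γ)

lemma tendsto_deriv_forwardMap_cobounded :
    Tendsto (deriv (forwardMap Q Z z_c Γ)) (cobounded ℂ) (𝓝 (Complex.exp Γ)) := by
  have hcorrection : Tendsto (fun z => 1 + ∑ k, (Q k : ℂ) * ((Z k - z_c) / (z - Z k)))
      (cobounded ℂ) (𝓝 1) := by
    simpa using tendsto_const_nhds.add <| tendsto_finsetSum Finset.univ
      fun k _ => (tendsto_const_div_sub_cobounded (Z k - z_c) (Z k)).const_mul (Q k : ℂ)
  have hlim := (tendsto_exponent_cobounded Q Z z_c Γ).cexp.mul hcorrection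
  rw [mul_one] at hlim
  refine hlim.congr' ?_
  filter_upwards [eventually_mem_slitPlane_cobounded Z z_c] with z hz
  exact (hasDerivAt_forwardMap hz).deriv.symm

end ChargeSimulation

open ChargeSimulation

theorem stmt_7_general (N : ℕ) (Q : Fin N → ℝ)
    (Z : Fin N → ℂ) (z_c : ℂ) (Γ : ℝ) (R : ℝ)
    (hZ : ∀ k, ‖Z k‖ < R) (hzc : ‖z_c‖ < R) :
    (∀ z : ℂ, R < ‖z‖ →
      DifferentiableAt ℂ
        (fun z : ℂ =>
          (z - z_c) * Complex.exp ((Γ : ℂ) + ∑ k, (Q k : ℂ) * Complex.log ((z - Z k) / (z - z_c))))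
        z) ∧
    Tendsto
      (deriv (fun z : ℂ =>
        (z - z_c) * Complex.exp ((Γ : ℂ) + ∑ k, (Q k : ℂ) * Complex.log ((z - Z k) / (z - z_c)))))
      (Bornology.cobounded ℂ) (nhds ((Real.exp Γ : ℝ) : ℂ)) := by
  refine ⟨fun z hz => ?_, ?_⟩
  · exact (hasDerivAt_forwardMap (Γ := Γ) (Q := Q)
      fun k => div_sub_mem_slitPlane (hZ k) hzc hz).differentiableAt
  · rw [Complex.ofReal_exp]
    exact tendsto_deriv_forwardMap_cobounded Q Z z_c Γ

theorem stmt_7 (N : ℕ) (hN : 0 < N) (Q : Fin N → ℝ) (hQ : ∑ k, Q k = 0)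
    (Z : Fin N → ℂ) (z_c : ℂ) (Γ : ℝ) (R : ℝ) (hR : 0 < R)
    (hZ : ∀ k, ‖Z k‖ < R) (hzc : ‖z_c‖ < R) :
    (∀ z : ℂ, R < ‖z‖ →
      DifferentiableAt ℂ
        (fun z : ℂ =>
          (z - z_c) * Complex.exp ((Γ : ℂ) + ∑ k, (Q k : ℂ) * Complex.log ((z - Z k) / (z - z_c))))
        z) ∧
    Tendsto
      (deriv (fun z : ℂ =>
        (z - z_c) * Complex.exp ((Γ : ℂ) + ∑ k, (Q k : ℂ) * Complex.log ((z - Z k) / (z - z_c)))))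
      (Bornology.cobounded ℂ) (nhds ((Real.exp Γ : ℝ) : ℂ)) :=
  stmt_7_general N Q Z z_c Γ R hZ hzc
end

section
/- Assume the charge constraint ∑_{k} Q k = 0, and let z ∈ ℂ satisfy z ≠ z_c and z ≠ Z k for all k. Then for ζ̃(z) = (z − z_c) · Complex.exp(Γ + ∑_{k} Q k · Complex.log((z − Z k)/(z − z_c))) one has the equivalence: ‖ζ̃(z)‖ = 1 if and only if ∑_{k} Q k · Real.log ‖z − Z k‖ + Γ = − Real.log ‖z − z_c‖. -/
/-!
Since `‖exp s‖ = exp (re s)` and `re (log u) = log ‖u‖`, the condition `‖ζ̃(z)‖ = 1` is the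
vanishing of `log ‖z - z_c‖ + Γ + ∑ Q k (log ‖z - Z k‖ - log ‖z - z_c‖)`; the charge constraint
`∑ Q k = 0` removes the `log ‖z - z_c‖` terms inside the sum.
-/

namespace Complex

theorem re_log_div {a b : ℂ} (ha : a ≠ 0) (hb : b ≠ 0) :
    (log (a / b)).re = Real.log ‖a‖ - Real.log ‖b‖ := by
  rw [log_re, norm_div, Real.log_div (norm_ne_zero_iff.mpr ha) (norm_ne_zero_iff.mpr hb)]

theorem re_sum_ofReal_mul_log_div {ι : Type*} {s : Finset ι} {Q : ι → ℝ} (hQ : ∑ k ∈ s, Q k = 0)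
    {a : ι → ℂ} (ha : ∀ k ∈ s, a k ≠ 0) {b : ℂ} (hb : b ≠ 0) :
    (∑ k ∈ s, (Q k : ℂ) * log (a k / b)).re = ∑ k ∈ s, Q k * Real.log ‖a k‖ := by
  have hterm : ∀ k ∈ s, ((Q k : ℂ) * log (a k / b)).re
      = Q k * Real.log ‖a k‖ - Q k * Real.log ‖b‖ := fun k hk => by
    rw [re_ofReal_mul, re_log_div (ha k hk) hb, mul_sub]
  rw [re_sum, Finset.sum_congr rfl hterm, Finset.sum_sub_distrib, ← Finset.sum_mul, hQ,
    zero_mul, sub_zero]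

theorem norm_mul_exp_eq_one_iff {w : ℂ} (hw : w ≠ 0) (s : ℂ) :
    ‖w * exp s‖ = 1 ↔ s.re = -Real.log ‖w‖ := by
  have hexp : ‖w * exp s‖ = Real.exp (Real.log ‖w‖ + s.re) := by
    rw [norm_mul, norm_exp, Real.exp_add, Real.exp_log (norm_pos_iff.mpr hw)]
  rw [hexp, Real.exp_eq_one_iff, eq_neg_iff_add_eq_zero, add_comm]

end Complex

theorem stmt_10_general (N : ℕ) (Q : Fin N → ℝ) (hQ : ∑ k, Q k = 0)
    (Z : Fin N → ℂ) (z_c : ℂ) (Γ : ℝ) (z : ℂ) (hz : z ≠ z_c) (hZ : ∀ k, z ≠ Z k) :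
    ‖(z - z_c) * Complex.exp ((Γ : ℂ) + ∑ k, (Q k : ℂ) * Complex.log ((z - Z k) / (z - z_c)))‖ = 1
      ↔ (∑ k, Q k * Real.log ‖z - Z k‖) + Γ = - Real.log ‖z - z_c‖ := by
  rw [Complex.norm_mul_exp_eq_one_iff (sub_ne_zero.mpr hz), Complex.add_re, Complex.ofReal_re,
    Complex.re_sum_ofReal_mul_log_div hQ (fun k _ => sub_ne_zero.mpr (hZ k)) (sub_ne_zero.mpr hz),
    add_comm]

theorem stmt_10 (N : ℕ) (hN : 0 < N) (Q : Fin N → ℝ) (hQ : ∑ k, Q k = 0)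
    (Z : Fin N → ℂ) (z_c : ℂ) (Γ : ℝ) (z : ℂ) (hz : z ≠ z_c) (hZ : ∀ k, z ≠ Z k) :
    ‖(z - z_c) * Complex.exp ((Γ : ℂ) + ∑ k, (Q k : ℂ) * Complex.log ((z - Z k) / (z - z_c)))‖ = 1
      ↔ (∑ k, Q k * Real.log ‖z - Z k‖) + Γ = - Real.log ‖z - z_c‖ :=
  stmt_10_general N Q hQ Z z_c Γ z hz hZ
end

section
/- Let N₁, N₂ be positive natural numbers; let Q₁ : Fin N₁ → ℝ and Q₂ : Fin N₂ → ℝ be real charges with ∑_{k} Q₂ k = 0; let W₁ : Fin N₁ → ℂ and W₂ : Fin N₂ → ℂ be charge points; let w_β, w_c2, w₁₀ ∈ ℂ with w_β ≠ w_c2. Define ζ(w) = ((w − w_c2)/(w_β − w_c2)) · Complex.exp( ∑_{k} Q₁ k · (Complex.log((w − W₁ k)/(w₁₀ − W₁ k)) − Complex.log((w_β − W₁ k)/(w₁₀ − W₁ k))) + ∑_{k} Q₂ k · (Complex.log((w − W₂ k)/(w − w_c2)) − Complex.log((w_β − W₂ k)/(w_β − w_c2))) ). Let r > 0, and let w ∈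 ℂ satisfy w ≠ w_c2, w ≠ W₁ k and w_β ≠ W₁ k and w₁₀ ≠ W₁ k for all k, and w ≠ W₂ k and w_β ≠ W₂ k for all k. Then ‖ζ(w)‖ = r if and only if ∑_{k} Q₁ k · Real.log ‖(w − W₁ k)/(w_β − W₁ k)‖ + ∑_{k} Q₂ k · Real.log ‖(w − W₂ k)/(w_β − W₂ k)‖ − Real.log r = − Real.log ‖(w − w_c2)/(w_β − w_c2)‖. -/
/-!
Since `‖exp z‖ = exp (re z)` and `re (log u) = Real.log ‖u‖`, the modulus of `ζ(w)` only sees the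
real parts of the logarithms, where the principal branch plays no role: each bracket contributes
the real-linear quantity `Real.log ‖(w - W k) / (w_β - W k)‖`, up to a term
`Real.log ‖(w - w_c2) / (w_β - w_c2)‖` in the second family, which is killed by `∑ Q₂ k = 0`.
Taking logarithms of `‖ζ(w)‖ = r` then gives the linear equation.
-/

open Complex

lemma Complex.re_log_div_sub_log_div {x y c d : ℂ} (hx : x ≠ 0) (hy : y ≠ 0) (hc : c ≠ 0)
    (hd : d ≠ 0) :
    (log (x / c) - log (y / d)).re = Real.log ‖x / y‖ - Real.log ‖c / d‖ := by
  have hnorm {u : ℂ} (hu : u ≠ 0) : ‖u‖ ≠ 0 := norm_ne_zero_iff.mpr hu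
  simp only [sub_re, log_re, norm_div]
  rw [Real.log_div (hnorm hx) (hnorm hc), Real.log_div (hnorm hy) (hnorm hd),
    Real.log_div (hnorm hx) (hnorm hy), Real.log_div (hnorm hc) (hnorm hd)]
  ring

lemma Complex.re_log_div_sub_log_div_same {x y c : ℂ} (hx : x ≠ 0) (hy : y ≠ 0) (hc : c ≠ 0) :
    (log (x / c) - log (y / c)).re = Real.log ‖x / y‖ := by
  rw [re_log_div_sub_log_div hx hy hc hc, div_self hc, norm_one, Real.log_one, sub_zero]

lemma Complex.re_sum_ofReal_mul {ι : Type*} (s : Finset ι) (Q : ι → ℝ) (z : ι → ℂ) :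
    (∑ k ∈ s, (Q k : ℂ) * z k).re = ∑ k ∈ s, Q k * (z k).re := by
  simp only [re_sum, re_ofReal_mul]

lemma Finset.sum_mul_sub_const_of_sum_eq_zero {ι : Type*} {s : Finset ι} {Q : ι → ℝ}
    (hQ : ∑ k ∈ s, Q k = 0) (f : ι → ℝ) (C : ℝ) :
    ∑ k ∈ s, Q k * (f k - C) = ∑ k ∈ s, Q k * f k := by
  simp only [mul_sub, Finset.sum_sub_distrib, ← Finset.sum_mul, hQ, zero_mul, sub_zero]

lemma Complex.norm_mul_exp_eq_iff {a z : ℂ} {r : ℝ} (ha : a ≠ 0) (hr : 0 < r) :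
    ‖a * exp z‖ = r ↔ z.re - Real.log r = -Real.log ‖a‖ := by
  have hmod : ‖a * exp z‖ = Real.exp (Real.log ‖a‖ + z.re) := by
    rw [norm_mul, norm_exp, Real.exp_add, Real.exp_log (norm_pos_iff.mpr ha)]
  rw [hmod, ← Real.exp_log hr, Real.exp_eq_exp, Real.exp_log hr]
  constructor <;> intro h <;> linarith

theorem stmt_18_general (N₁ N₂ : ℕ)
    (Q₁ : Fin N₁ → ℝ) (Q₂ : Fin N₂ → ℝ) (hQ₂ : ∑ k, Q₂ k = 0)
    (W₁ : Fin N₁ → ℂ) (W₂ : Fin N₂ → ℂ) (w_β w_c2 w₁₀ : ℂ) (hβc : w_β ≠ w_c2)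
    (r : ℝ) (hr : 0 < r) (w : ℂ) (hw : w ≠ w_c2)
    (hW₁ : ∀ k, w ≠ W₁ k ∧ w_β ≠ W₁ k ∧ w₁₀ ≠ W₁ k)
    (hW₂ : ∀ k, w ≠ W₂ k ∧ w_β ≠ W₂ k) :
    ‖((w - w_c2) / (w_β - w_c2)) *
        Complex.exp
          ((∑ k, (Q₁ k : ℂ) *
              (Complex.log ((w - W₁ k) / (w₁₀ - W₁ k)) -
                Complex.log ((w_β - W₁ k) / (w₁₀ - W₁ k)))) +
            ∑ k, (Q₂ k : ℂ) *
              (Complex.log ((w - W₂ k) / (w - w_c2)) -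
                Complex.log ((w_β - W₂ k) / (w_β - w_c2))))‖ = r
      ↔ (∑ k, Q₁ k * Real.log ‖(w - W₁ k) / (w_β - W₁ k)‖) +
          (∑ k, Q₂ k * Real.log ‖(w - W₂ k) / (w_β - W₂ k)‖) - Real.log r
        = - Real.log ‖(w - w_c2) / (w_β - w_c2)‖ := by
  have hc : w - w_c2 ≠ 0 := sub_ne_zero.mpr hw
  have hβ : w_β - w_c2 ≠ 0 := sub_ne_zero.mpr hβc
  have hre₁ : ∀ k, (log ((w - W₁ k) / (w₁₀ - W₁ k)) - log ((w_β - W₁ k) / (w₁₀ - W₁ k))).re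
      = Real.log ‖(w - W₁ k) / (w_β - W₁ k)‖ := fun k =>
    re_log_div_sub_log_div_same (sub_ne_zero.mpr (hW₁ k).1) (sub_ne_zero.mpr (hW₁ k).2.1)
      (sub_ne_zero.mpr (hW₁ k).2.2)
  have hre₂ : ∀ k, (log ((w - W₂ k) / (w - w_c2)) - log ((w_β - W₂ k) / (w_β - w_c2))).re
      = Real.log ‖(w - W₂ k) / (w_β - W₂ k)‖ - Real.log ‖(w - w_c2) / (w_β - w_c2)‖ := fun k =>
    re_log_div_sub_log_div (sub_ne_zero.mpr (hW₂ k).1) (sub_ne_zero.mpr (hW₂ k).2) hc hβ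
  rw [norm_mul_exp_eq_iff (div_ne_zero hc hβ) hr, add_re, re_sum_ofReal_mul,
    re_sum_ofReal_mul]
  simp only [hre₁, hre₂, Finset.sum_mul_sub_const_of_sum_eq_zero hQ₂]

theorem stmt_18 (N₁ N₂ : ℕ) (hN₁ : 0 < N₁) (hN₂ : 0 < N₂)
    (Q₁ : Fin N₁ → ℝ) (Q₂ : Fin N₂ → ℝ) (hQ₂ : ∑ k, Q₂ k = 0)
    (W₁ : Fin N₁ → ℂ) (W₂ : Fin N₂ → ℂ) (w_β w_c2 w₁₀ : ℂ) (hβc : w_β ≠ w_c2)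
    (r : ℝ) (hr : 0 < r) (w : ℂ) (hw : w ≠ w_c2)
    (hW₁ : ∀ k, w ≠ W₁ k ∧ w_β ≠ W₁ k ∧ w₁₀ ≠ W₁ k)
    (hW₂ : ∀ k, w ≠ W₂ k ∧ w_β ≠ W₂ k) :
    ‖((w - w_c2) / (w_β - w_c2)) *
        Complex.exp
          ((∑ k, (Q₁ k : ℂ) *
              (Complex.log ((w - W₁ k) / (w₁₀ - W₁ k)) -
                Complex.log ((w_β - W₁ k) / (w₁₀ - W₁ k)))) +
            ∑ k, (Q₂ k : ℂ) *
              (Complex.log ((w - W₂ k) / (w - w_c2)) -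
                Complex.log ((w_β - W₂ k) / (w_β - w_c2))))‖ = r
      ↔ (∑ k, Q₁ k * Real.log ‖(w - W₁ k) / (w_β - W₁ k)‖) +
          (∑ k, Q₂ k * Real.log ‖(w - W₂ k) / (w_β - W₂ k)‖) - Real.log r
        = - Real.log ‖(w - w_c2) / (w_β - w_c2)‖ :=
  stmt_18_general N₁ N₂ Q₁ Q₂ hQ₂ W₁ W₂ w_β w_c2 w₁₀ hβc r hr w hw hW₁ hW₂
end
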